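/- Let α_0,...,α_{n-1} ∈ (0,π) and define intervals I_0 = [α_0, α_0] ⊂ [0,π] and, inductively, I_{i+1} = ⋃_{φ ∈ I_i} [min{φ⊖α_{i+1}, φ⊕α_{i+1}}, max{φ⊖α_{i+1}, φ⊕α_{i+1}}], where α⊕β = min{α+β, 2π−α−β} and α⊖β = |α−β|. Then each I_i is a (closed connected) subinterval of [0,π], and there exists a spherical polygon (u_0,...,u_{n-1}) in S² with d(u_{i−1},u_i) = α_i for all i (indices mod n) if and only if 0 ∈ I_{n-1}. -/

import Mathlib

/-!
For unit vectors `v, w` and a pole `N`, the triangle inequality for angles (applied also to the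
antipode `-v`) puts `angle N w` in `[angle N v ⊖ β, angle N v ⊕ β]` where `β = angle v w`;
conversely, in dimension at least three, the spherical law of cosines shows that every value in
this interval is attained by some `w` at angle `β` from `v`. Hence `I i` is exactly the set of
polar angles of the endpoints of the paths from `N` with edge lengths `α 0, …, α i`, and a
closed polygon exists iff such a path with `i = n - 1` returns to `N`, i.e. iff `0 ∈ I (n - 1)`.
Each `I i` is an interval because the union of the intervals `[φ ⊖ β, φ ⊕ β]` over `φ` in an
interval is again an interval, by continuity.
-/

open Real
open scoped RealInnerProductSpace

/-- The spherical (geodesic) distance between unit vectors. -/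
noncomputable def sdist (u v : EuclideanSpace ℝ (Fin 3)) : ℝ :=
  Real.arccos ⟪u, v⟫

/-- `α ⊕ β = min {α + β, 2π - (α + β)}`. -/
noncomputable def oplus (a b : ℝ) : ℝ := min (a + b) (2 * π - (a + b))

/-- `α ⊖ β = |α - β|`. -/
def ominus (a b : ℝ) : ℝ := |a - b|

/-- The inductively defined sets of polar angles: `I 0 = [α 0, α 0]` and
`I (i+1) = ⋃_{φ ∈ I i} [min {φ⊖α(i+1), φ⊕α(i+1)}, max {φ⊖α(i+1), φ⊕α(i+1)}]`. -/
noncomputable def Iiter (α : ℕ → ℝ) : ℕ → Set ℝ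
  | 0 => Set.Icc (α 0) (α 0)
  | i + 1 => ⋃ φ ∈ Iiter α i,
      Set.Icc (min (ominus φ (α (i + 1))) (oplus φ (α (i + 1))))
              (max (ominus φ (α (i + 1))) (oplus φ (α (i + 1))))

open InnerProductGeometry

theorem ominus_nonneg (a b : ℝ) : 0 ≤ ominus a b := abs_nonneg _

theorem oplus_le_pi (a b : ℝ) : oplus a b ≤ π := by
  rcases le_total (a + b) π with h | h
  · exact (min_le_left _ _).trans h
  · exact (min_le_right _ _).trans (by linarith)

theorem ominus_le_oplus {a b : ℝ} (ha : a ∈ Set.Icc 0 π) (hb : b ∈ Set.Icc 0 π) :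
    ominus a b ≤ oplus a b :=
  le_min (abs_le.2 ⟨by linarith [ha.1], by linarith [hb.1]⟩)
    (abs_le.2 ⟨by linarith [ha.2, hb.2], by linarith [ha.2, hb.2]⟩)

theorem cos_oplus (a b : ℝ) : cos (oplus a b) = cos (a + b) := by
  rcases min_choice (a + b) (2 * π - (a + b)) with h | h <;>
    simp only [oplus, h, cos_two_pi_sub]

theorem exists_cos_eq_of_mem_Icc_ominus_oplus {φ β ψ : ℝ}
    (hψ : ψ ∈ Set.Icc (ominus φ β) (oplus φ β)) :
    ∃ c ∈ Set.Icc (-1 : ℝ) 1, cos φ * cos β + sin φ * sin β * c = cos ψ := by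
  have hlo : cos (φ + β) ≤ cos ψ := by
    rw [← cos_oplus]
    exact cos_le_cos_of_nonneg_of_le_pi ((ominus_nonneg _ _).trans hψ.1) (oplus_le_pi _ _) hψ.2
  have hhi : cos ψ ≤ cos (φ - β) := by
    rw [← cos_abs (φ - β)]
    exact cos_le_cos_of_nonneg_of_le_pi (abs_nonneg _) (hψ.2.trans (oplus_le_pi _ _)) hψ.1
  have hcont : ContinuousOn (fun c => cos φ * cos β + sin φ * sin β * c) (Set.Icc (-1) 1) := by
    fun_prop
  refine intermediate_value_Icc (by norm_num) hcont ⟨?_, ?_⟩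
  · simpa [cos_add, ← sub_eq_add_neg] using hlo
  · simpa [cos_sub] using hhi

theorem exists_biUnion_Icc_eq_Icc {X : Type*} [TopologicalSpace X] {s : Set X}
    (hs : IsCompact s) (hs' : IsPreconnected s) (hne : s.Nonempty) {f g : X → ℝ}
    (hf : ContinuousOn f s) (hg : ContinuousOn g s) (hfg : ∀ x ∈ s, f x ≤ g x) :
    ∃ x₁ ∈ s, ∃ x₂ ∈ s, f x₁ ≤ g x₂ ∧ ⋃ x ∈ s, Set.Icc (f x) (g x) = Set.Icc (f x₁) (g x₂) := by
  obtain ⟨x₁, hx₁, hmin⟩ := hs.exists_isMinOn hne hf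
  obtain ⟨x₂, hx₂, hmax⟩ := hs.exists_isMaxOn hne hg
  refine ⟨x₁, hx₁, x₂, hx₂, (hfg x₁ hx₁).trans (hmax hx₁), Set.Subset.antisymm ?_ ?_⟩
  · simp only [Set.iUnion_subset_iff]
    exact fun x hx => Set.Icc_subset_Icc (hmin hx) (hmax hx)
  · rintro y ⟨hy₁, hy₂⟩
    simp only [Set.mem_iUnion, Set.mem_Icc, exists_prop]
    rcases le_total y (g x₁) with hy | hy
    · exact ⟨x₁, hx₁, hy₁, hy⟩
    · -- the upper endpoint `g` sweeps `[g x₁, g x₂]`, and `f ≤ g` below it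
      obtain ⟨x, hx, hgx⟩ := hs'.intermediate_value hx₁ hx₂ hg ⟨hy, hy₂⟩
      exact ⟨x, hx, hgx ▸ hfg x hx, hgx.ge⟩

theorem Iiter_succ {α : ℕ → ℝ} {i : ℕ} (hI : Iiter α i ⊆ Set.Icc 0 π)
    (hα : α (i + 1) ∈ Set.Icc 0 π) :
    Iiter α (i + 1) = ⋃ φ ∈ Iiter α i, Set.Icc (ominus φ (α (i + 1))) (oplus φ (α (i + 1))) :=
  Set.iUnion₂_congr fun φ hφ => by
    rw [min_eq_left (ominus_le_oplus (hI hφ) hα), max_eq_right (ominus_le_oplus (hI hφ) hα)]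

theorem Iiter_eq_Icc {α : ℕ → ℝ} {i : ℕ} (hα : ∀ j ≤ i, α j ∈ Set.Icc 0 π) :
    ∃ a b : ℝ, 0 ≤ a ∧ a ≤ b ∧ b ≤ π ∧ Iiter α i = Set.Icc a b := by
  induction i with
  | zero => exact ⟨α 0, α 0, (hα 0 le_rfl).1, le_rfl, (hα 0 le_rfl).2, rfl⟩
  | succ i ih =>
    obtain ⟨a, b, ha, hab, hb, hI⟩ := ih fun j hj => hα j (hj.trans i.le_succ)
    have hab' : Set.Icc a b ⊆ Set.Icc 0 π := Set.Icc_subset_Icc ha hb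
    obtain ⟨x₁, -, x₂, -, hx, hU⟩ := exists_biUnion_Icc_eq_Icc isCompact_Icc isPreconnected_Icc
      (Set.nonempty_Icc.2 hab) (f := fun φ => ominus φ (α (i + 1)))
      (g := fun φ => oplus φ (α (i + 1))) (by unfold ominus; fun_prop)
      (by unfold oplus; fun_prop) fun φ hφ => ominus_le_oplus (hab' hφ) (hα _ le_rfl)
    refine ⟨_, _, ominus_nonneg _ _, hx, oplus_le_pi _ _, ?_⟩
    rw [Iiter_succ (hI ▸ hab') (hα _ le_rfl), hI, hU]

section Geometry

variable {E : Type*} [NormedAddCommGroup E] [InnerProductSpace ℝ E]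

theorem inner_eq_cos_angle {x y : E} (hx : ‖x‖ = 1) (hy : ‖y‖ = 1) :
    ⟪x, y⟫ = cos (angle x y) := by
  simpa [hx, hy] using (cos_angle_mul_norm_mul_norm x y).symm

theorem angle_eq_of_inner_eq_cos {x y : E} (hx : ‖x‖ = 1) (hy : ‖y‖ = 1) {θ : ℝ}
    (hθ : θ ∈ Set.Icc 0 π) (h : ⟪x, y⟫ = cos θ) : angle x y = θ := by
  rw [angle, h, hx, hy, mul_one, div_one, arccos_cos hθ.1 hθ.2]

theorem angle_eq_zero_iff_of_norm_eq_one {x y : E} (hx : ‖x‖ = 1) (hy : ‖y‖ = 1) :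
    angle x y = 0 ↔ x = y := by
  refine ⟨fun h => ?_, fun h => h ▸ angle_self (norm_ne_zero_iff.1 (hx.trans_ne one_ne_zero))⟩
  rw [← inner_eq_one_iff_of_norm_eq_one (𝕜 := ℝ) hx hy, inner_eq_cos_angle hx hy, h, cos_zero]

theorem norm_eq_one_of_inner_self_eq_one {x : E} (h : ⟪x, x⟫ = 1) : ‖x‖ = 1 := by
  rw [real_inner_self_eq_norm_sq] at h
  nlinarith [norm_nonneg x]

theorem angle_mem_Icc_ominus_oplus (x y z : E) :
    angle x z ∈ Set.Icc (ominus (angle x y) (angle y z)) (oplus (angle x y) (angle y z)) := by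
  have hxy := angle_le_angle_add_angle x y z
  have hxz := angle_le_angle_add_angle x z y
  have hyx := angle_le_angle_add_angle y x z
  have hneg := angle_le_angle_add_angle x (-y) z
  rw [angle_neg_right, angle_neg_left] at hneg
  rw [angle_comm z y] at hxz
  rw [angle_comm y x] at hyx
  exact ⟨abs_sub_le_iff.2 ⟨by linarith, by linarith⟩, le_min hxy (by linarith)⟩

variable [FiniteDimensional ℝ E]

theorem exists_norm_eq_one_inner_eq_zero_inner_eq_zero (hE : 2 < Module.finrank ℝ E)
    (u v : E) :
    ∃ x : E, ‖x‖ = 1 ∧ ⟪u, x⟫ = 0 ∧ ⟪v, x⟫ = 0 := by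
  classical
  set K := Submodule.span ℝ (({u, v} : Finset E) : Set E)
  have hK : Module.finrank ℝ K ≤ 2 :=
    (finrank_span_finset_le_card _).trans Finset.card_le_two
  have hKperp : Kᗮ ≠ ⊥ := by
    rw [Ne, ← Submodule.finrank_eq_zero]
    have := K.finrank_add_finrank_orthogonal
    omega
  obtain ⟨x, hxK, hx0⟩ := Submodule.exists_mem_ne_zero_of_ne_bot hKperp
  have hperp : ∀ w ∈ ({u, v} : Finset E), ⟪w, x⟫ = 0 := fun w hw =>
    (Submodule.mem_orthogonal K x).1 hxK w (Submodule.subset_span hw)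
  refine ⟨‖x‖⁻¹ • x, norm_smul_inv_norm hx0, ?_, ?_⟩ <;>
    simp [real_inner_smul_right, hperp]

theorem exists_orthonormal_pair_inner_eq_zero
    (hE : 2 < Module.finrank ℝ E) {v r : E} (hr : ⟪v, r⟫ = 0) :
    ∃ e₁ e₂ : E, ‖e₁‖ = 1 ∧ ‖e₂‖ = 1 ∧ ⟪v, e₁⟫ = 0 ∧ ⟪v, e₂⟫ = 0 ∧ ⟪e₁, e₂⟫ = 0 ∧
      r = ‖r‖ • e₁ := by
  by_cases hr0 : r = 0
  · obtain ⟨e₁, he₁, hve₁, -⟩ := exists_norm_eq_one_inner_eq_zero_inner_eq_zero hE v v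
    obtain ⟨e₂, he₂, hve₂, he₁e₂⟩ := exists_norm_eq_one_inner_eq_zero_inner_eq_zero hE v e₁
    exact ⟨e₁, e₂, he₁, he₂, hve₁, hve₂, he₁e₂, by simp [hr0]⟩
  · obtain ⟨e₂, he₂, hve₂, hre₂⟩ := exists_norm_eq_one_inner_eq_zero_inner_eq_zero hE v r
    refine ⟨‖r‖⁻¹ • r, e₂, norm_smul_inv_norm hr0, he₂, ?_, hve₂, ?_, ?_⟩
    · rw [real_inner_smul_right, hr, mul_zero]
    · rw [real_inner_smul_left, hre₂, mul_zero]
    · rw [smul_inv_smul₀ (norm_ne_zero_iff.2 hr0)]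

theorem exists_orthonormal_pair_eq_cos_smul_add_sin_smul (hE : 2 < Module.finrank ℝ E)
    {N v : E} (hN : ‖N‖ = 1) (hv : ‖v‖ = 1) :
    ∃ e₁ e₂ : E, ‖e₁‖ = 1 ∧ ‖e₂‖ = 1 ∧ ⟪v, e₁⟫ = 0 ∧ ⟪v, e₂⟫ = 0 ∧ ⟪e₁, e₂⟫ = 0 ∧
      N = cos (angle N v) • v + sin (angle N v) • e₁ := by
  set φ := angle N v
  have hNv : ⟪N, v⟫ = cos φ := inner_eq_cos_angle hN hv
  have hvv : ⟪v, v⟫ = 1 := by rw [real_inner_self_eq_norm_sq, hv, one_pow]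
  have hNN : ⟪N, N⟫ = 1 := by rw [real_inner_self_eq_norm_sq, hN, one_pow]
  set r := N - cos φ • v
  have hvr : ⟪v, r⟫ = 0 := by
    rw [inner_sub_right, real_inner_smul_right, hvv, real_inner_comm, hNv, mul_one, sub_self]
  have hr : ‖r‖ = sin φ := by
    refine (sq_eq_sq₀ (norm_nonneg _) (sin_nonneg_of_nonneg_of_le_pi
      (angle_nonneg N v) (angle_le_pi N v))).1 ?_
    rw [← real_inner_self_eq_norm_sq, sin_sq]
    simp only [r, inner_sub_left, inner_sub_right, real_inner_smul_left, real_inner_smul_right,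
      hNN, hvv, hNv, real_inner_comm N v]
    ring
  obtain ⟨e₁, e₂, he₁, he₂, hve₁, hve₂, he₁e₂, hre₁⟩ :=
    exists_orthonormal_pair_inner_eq_zero hE hvr
  refine ⟨e₁, e₂, he₁, he₂, hve₁, hve₂, he₁e₂, ?_⟩
  rw [← hr, ← hre₁, add_sub_cancel]

theorem exists_angle_eq_angle_eq (hE : 2 < Module.finrank ℝ E) {N v : E} (hN : ‖N‖ = 1)
    (hv : ‖v‖ = 1) {β ψ : ℝ} (hβ : β ∈ Set.Icc 0 π)
    (hψ : ψ ∈ Set.Icc (ominus (angle N v) β) (oplus (angle N v) β)) :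
    ∃ w : E, ‖w‖ = 1 ∧ angle v w = β ∧ angle N w = ψ := by
  obtain ⟨e₁, e₂, he₁, he₂, hve₁, hve₂, he₁e₂, hN'⟩ :=
    exists_orthonormal_pair_eq_cos_smul_add_sin_smul hE hN hv
  set φ := angle N v
  have hvv : ⟪v, v⟫ = 1 := by rw [real_inner_self_eq_norm_sq, hv, one_pow]
  obtain ⟨c, hc, hcψ⟩ := exists_cos_eq_of_mem_Icc_ominus_oplus hψ
  have hs : √(1 - c ^ 2) ^ 2 = 1 - c ^ 2 := sq_sqrt (by nlinarith [hc.1, hc.2])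
  -- `w` is at angle `β` from `v`, and `c` is the cosine of the dihedral angle at `v` between the
  -- planes `vN` and `vw`, chosen by the spherical law of cosines
  set w := cos β • v + (sin β * c) • e₁ + (sin β * √(1 - c ^ 2)) • e₂
  have he₁e₁ : ⟪e₁, e₁⟫ = 1 := by rw [real_inner_self_eq_norm_sq, he₁, one_pow]
  have he₂e₂ : ⟪e₂, e₂⟫ = 1 := by rw [real_inner_self_eq_norm_sq, he₂, one_pow]
  have hvw : ⟪v, w⟫ = cos β := by
    simp only [w, inner_add_right, real_inner_smul_right, hvv, hve₁, hve₂]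
    ring
  have hNw : ⟪N, w⟫ = cos ψ := by
    rw [hN', ← hcψ]
    simp only [w, inner_add_left, inner_add_right, real_inner_smul_left, real_inner_smul_right,
      hvv, hve₁, hve₂, he₁e₁, he₁e₂, real_inner_comm v]
    ring
  have hw : ‖w‖ = 1 := by
    apply norm_eq_one_of_inner_self_eq_one
    simp only [w, inner_add_left, inner_add_right, real_inner_smul_left, real_inner_smul_right,
      hvv, hve₁, hve₂, he₁e₁, he₂e₂, he₁e₂, real_inner_comm v, real_inner_comm e₁ e₂]
    linear_combination (sin β) ^ 2 * hs + sin_sq_add_cos_sq β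
  have hψπ : ψ ∈ Set.Icc 0 π := ⟨(ominus_nonneg _ _).trans hψ.1, hψ.2.trans (oplus_le_pi _ _)⟩
  exact ⟨w, hw, angle_eq_of_inner_eq_cos hv hw hβ hvw, angle_eq_of_inner_eq_cos hN hw hψπ hNw⟩

end Geometry

section PathEnds

variable {E : Type*} [NormedAddCommGroup E] [InnerProductSpace ℝ E]

def pathEnds (N : E) (α : ℕ → ℝ) : ℕ → Set E
  | 0 => {N}
  | k + 1 => {w | ‖w‖ = 1 ∧ ∃ v ∈ pathEnds N α k, angle v w = α k}

variable {N : E} {α : ℕ → ℝ}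

theorem norm_eq_one_of_mem_pathEnds (hN : ‖N‖ = 1) {k : ℕ} {w : E} (hw : w ∈ pathEnds N α k) :
    ‖w‖ = 1 := by
  cases k with
  | zero => exact (Set.mem_singleton_iff.1 hw) ▸ hN
  | succ k => exact hw.1

theorem mem_pathEnds_iff {k : ℕ} {w : E} :
    w ∈ pathEnds N α k ↔ ∃ v : ℕ → E, v 0 = N ∧ v k = w ∧
      ∀ j < k, ‖v (j + 1)‖ = 1 ∧ angle (v j) (v (j + 1)) = α j := by
  induction k generalizing w with
  | zero => exact ⟨fun hw => ⟨fun _ => N, rfl, hw.symm, by simp⟩, fun ⟨v, h0, hw, _⟩ => hw ▸ h0⟩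
  | succ k ih =>
    constructor
    · rintro ⟨hw, v', hv', hv'w⟩
      obtain ⟨v, h0, hk, hpath⟩ := ih.1 hv'
      refine ⟨Function.update v (k + 1) w, by simp [h0], by simp, fun j hj => ?_⟩
      rcases Nat.lt_succ_iff_lt_or_eq.1 hj with hj | rfl
      · have hj₀ : j ≠ k + 1 := by omega
        have hj₁ : j + 1 ≠ k + 1 := by omega
        simpa [Function.update_of_ne hj₀, Function.update_of_ne hj₁] using hpath j hj
      · simpa [hk] using ⟨hw, hv'w⟩
    · rintro ⟨v, h0, rfl, hpath⟩
      exact ⟨(hpath k k.lt_succ_self).1, v k, ih.2 ⟨v, h0, rfl, fun j hj => hpath j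
        (hj.trans k.lt_succ_self)⟩, (hpath k k.lt_succ_self).2⟩

theorem zero_mem_image_angle_pathEnds_iff (hN : ‖N‖ = 1) {k : ℕ} :
    0 ∈ angle N '' pathEnds N α (k + 1) ↔ N ∈ pathEnds N α (k + 1) := by
  refine ⟨fun ⟨w, hw, hNw⟩ => ?_, fun hN' => ⟨N, hN', ?_⟩⟩
  · obtain rfl := (angle_eq_zero_iff_of_norm_eq_one hN hw.1).1 hNw
    exact hw
  · exact (angle_eq_zero_iff_of_norm_eq_one hN hN).2 rfl

variable [FiniteDimensional ℝ E]

theorem image_angle_pathEnds_succ (hE : 2 < Module.finrank ℝ E)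
    (hN : ‖N‖ = 1) {k : ℕ} (hα : α k ∈ Set.Icc 0 π) :
    angle N '' pathEnds N α (k + 1) =
      ⋃ φ ∈ angle N '' pathEnds N α k, Set.Icc (ominus φ (α k)) (oplus φ (α k)) := by
  rw [Set.biUnion_image]
  ext ψ
  simp only [Set.mem_iUnion, Set.mem_image, exists_prop]
  constructor
  · rintro ⟨w, ⟨-, v, hv, hvw⟩, rfl⟩
    exact ⟨v, hv, hvw ▸ angle_mem_Icc_ominus_oplus N v w⟩
  · rintro ⟨v, hv, hψ⟩
    obtain ⟨w, hw, hvw, hNw⟩ :=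
      exists_angle_eq_angle_eq hE hN (norm_eq_one_of_mem_pathEnds hN hv) hα hψ
    exact ⟨w, ⟨hw, v, hv, hvw⟩, hNw⟩

theorem Iiter_eq_image_angle_pathEnds (hE : 2 < Module.finrank ℝ E)
    (hN : ‖N‖ = 1) {i : ℕ} (hα : ∀ j ≤ i, α j ∈ Set.Icc 0 π) :
    Iiter α i = angle N '' pathEnds N α (i + 1) := by
  induction i with
  | zero =>
    obtain ⟨h0, hπ⟩ := hα 0 le_rfl
    rw [image_angle_pathEnds_succ hE hN (hα 0 le_rfl), pathEnds, Set.image_singleton,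
      (angle_eq_zero_iff_of_norm_eq_one hN hN).2 rfl, Set.biUnion_singleton]
    simp only [Iiter, ominus, oplus, zero_sub, abs_neg, abs_of_nonneg h0, zero_add]
    rw [min_eq_left (by linarith)]
  | succ i ih =>
    have ih := ih fun j hj => hα j (hj.trans i.le_succ)
    have hI : Iiter α i ⊆ Set.Icc 0 π := by
      rw [ih]
      rintro _ ⟨w, -, rfl⟩
      exact ⟨angle_nonneg _ _, angle_le_pi _ _⟩
    rw [Iiter_succ hI (hα _ le_rfl), ih, image_angle_pathEnds_succ hE hN (hα _ le_rfl)]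

end PathEnds

open Fin.NatCast in
theorem exists_closed_polygon_iff {E : Type*} [NormedAddCommGroup E] [InnerProductSpace ℝ E]
    {n : ℕ} [NeZero n] (α : ℕ → ℝ) :
    (∃ u : Fin n → E, (∀ i, ‖u i‖ = 1) ∧ ∀ i : Fin n, angle (u (i - 1)) (u i) = α i) ↔
      ∃ N : E, ‖N‖ = 1 ∧ N ∈ pathEnds N α n := by
  constructor
  · rintro ⟨u, hu, hang⟩
    refine ⟨u (0 - 1), hu _, mem_pathEnds_iff.2 ⟨fun j => u ((j : Fin n) - 1), by simp,
      by simp, fun j hj => ?_⟩⟩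
    have hsucc : ((j + 1 : ℕ) : Fin n) - 1 = j := by simp
    dsimp only
    rw [hsucc]
    exact ⟨hu _, by rw [hang, Fin.val_cast_of_lt hj]⟩
  · rintro ⟨N, hN, hmem⟩
    obtain ⟨v, h0, hn, hpath⟩ := mem_pathEnds_iff.1 hmem
    obtain ⟨m, rfl⟩ : ∃ m, n = m + 1 := Nat.exists_eq_succ_of_ne_zero (NeZero.ne n)
    refine ⟨fun i => v (i + 1), fun i => (hpath i i.isLt).1, fun i => ?_⟩
    -- the edge into `u 0` starts at `v (m + 1) = N = v 0`
    have hprev : v ((i - 1 : Fin (m + 1)) + 1) = v i := by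
      rw [Fin.coe_sub_one]
      split_ifs with hi
      · rw [hi, hn, Fin.val_zero, h0]
      · rw [Nat.sub_add_cancel (Nat.one_le_iff_ne_zero.2 (Fin.val_ne_zero_iff.2 hi))]
    simp only [hprev, (hpath i i.isLt).2]

theorem sdist_eq_angle {u v : EuclideanSpace ℝ (Fin 3)} (hu : ‖u‖ = 1) (hv : ‖v‖ = 1) :
    sdist u v = angle u v := by
  rw [sdist, angle, hu, hv, mul_one, div_one]

/-- Each `Iiter α i` is a nonempty closed subinterval of `[0, π]`, and the angle
sequence `α 0, …, α (n-1) ∈ (0,π)` is realizable by a spherical polygon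
`u 0, …, u (n-1)` with `sdist (u (i-1)) (u i) = α i` if and only if
`0 ∈ Iiter α (n-1)`. -/
theorem spherical_realizable_iff_zero_mem {n : ℕ} [NeZero n]
    (α : ℕ → ℝ) (hα : ∀ i < n, α i ∈ Set.Ioo 0 π) :
    (∀ i < n, ∃ a b : ℝ, 0 ≤ a ∧ a ≤ b ∧ b ≤ π ∧ Iiter α i = Set.Icc a b) ∧
    ((∃ u : Fin n → EuclideanSpace ℝ (Fin 3),
        (∀ i : Fin n, ‖u i‖ = 1) ∧
        ∀ i : Fin n, sdist (u (i - 1)) (u i) = α i.val) ↔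
      0 ∈ Iiter α (n - 1)) := by
  have hα' : ∀ i < n, α i ∈ Set.Icc 0 π := fun i hi => Set.Ioo_subset_Icc_self (hα i hi)
  have hE : 2 < Module.finrank ℝ (EuclideanSpace ℝ (Fin 3)) := by simp
  have hn : n - 1 + 1 = n := Nat.sub_add_cancel NeZero.one_le
  have hIiter {N : EuclideanSpace ℝ (Fin 3)} (hN : ‖N‖ = 1) :
      0 ∈ Iiter α (n - 1) ↔ N ∈ pathEnds N α n := by
    rw [Iiter_eq_image_angle_pathEnds hE hN fun j hj => hα' j (by omega),
      zero_mem_image_angle_pathEnds_iff hN, hn]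
  refine ⟨fun i hi => Iiter_eq_Icc fun j hj => hα' j (by omega), ?_⟩
  calc _ ↔ ∃ u : Fin n → EuclideanSpace ℝ (Fin 3), (∀ i, ‖u i‖ = 1) ∧
        ∀ i : Fin n, angle (u (i - 1)) (u i) = α i := by
        refine exists_congr fun u => and_congr_right fun hu => forall_congr' fun i => ?_
        rw [sdist_eq_angle (hu _) (hu _)]
    _ ↔ ∃ N, ‖N‖ = 1 ∧ N ∈ pathEnds N α n := exists_closed_polygon_iff α
    _ ↔ _ := by
        obtain ⟨N, hN⟩ := exists_norm_eq (EuclideanSpace ℝ (Fin 3)) zero_le_one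
        exact ⟨fun ⟨N', hN', h⟩ => (hIiter hN').2 h, fun h => ⟨N, hN, (hIiter hN).1 h⟩⟩
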